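/- Let Γ be a weighted congestion game fulfilling Conditions 1–2, Γ̂ its Ψ̂-game, and Φ̂(S) = ∑_{e∈𝔼} ∑_{k=0}^d (a_{e,k}/(k+1))·Ψ̂_{k+1}(U_e(S)). Then for every profile S, Φ̂(S) ≤ N·max_{u∈𝒩} ĉ_u(S) ≤ N^{d+1}·W^{d+1}·E·(d+1)!·max_{e∈𝔼} max_{0≤k≤d} a_{e,k}. -/

import Mathlib

/-- `hpoly k l` is the complete homogeneous symmetric polynomial of degree `k`
evaluated at the entries of the list `l`, i.e. the sum of all monomials of
total degree `k` in the elements of `l`. -/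
noncomputable def hpoly : ℕ → List ℝ → ℝ
  | 0, _ => 1
  | _ + 1, [] => 0
  | k + 1, a :: l => a * hpoly k (a :: l) + hpoly (k + 1) l
termination_by k l => (k, l.length)

/-- The `k`-order `Ψ̂`-function of a multiset `M` of reals:
`Ψ̂_k(M) = k! ·` (sum of all monomials of total degree `k` in the elements of `M`).
In particular `Ψ̂_0(M) = 1` and `Ψ̂_k(∅) = 0` for `k ≥ 1`. -/
noncomputable def psiHat (k : ℕ) (M : Multiset ℝ) : ℝ :=
  (Nat.factorial k : ℝ) * hpoly k M.toList

/-- A weighted congestion game with `N` players, `E` resources, polynomial latency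
functions of degree at most `d` (Condition 2, with coefficient-ratio bound `A`),
and players' weights in `[1, W]` (Condition 1). -/
structure WCGame (N E d : ℕ) (W A : ℝ) where
  /-- the strategy set of each player: a set of nonempty subsets of resources -/
  strat : Fin N → Set (Finset (Fin E))
  strat_nonempty : ∀ u, (strat u).Nonempty
  strat_valid : ∀ u, ∀ s ∈ strat u, s.Nonempty
  /-- the weight of each player -/
  w : Fin N → ℝ
  /-- `a e k` is the coefficient of `x^k` in the latency function of resource `e` -/
  a : Fin E → ℕ → ℝ
  hd : 1 ≤ d
  hW : 1 ≤ W
  hw_lower : ∀ u, 1 ≤ w u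
  hw_upper : ∀ u, w u ≤ W
  ha_nonneg : ∀ e k, 0 ≤ a e k
  ha_pos : ∀ e, 0 < ∑ k ∈ Finset.range (d + 1), a e k
  hA_pos : 0 < A
  hA_bound : ∀ e e' k k', k ≤ d → k' ≤ d → 0 < a e k → a e' k' ≤ A * a e k

namespace WCGame

/-- A (pure strategy) profile: a choice of a set of resources for every player. -/
abbrev Profile (N E : ℕ) := Fin N → Finset (Fin E)

variable {N E d : ℕ} {W A : ℝ}

/-- A profile is feasible if every player uses one of her strategies. -/
def IsProfile (G : WCGame N E d W A) (S : Profile N E) : Prop :=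
  ∀ u, S u ∈ G.strat u

/-- `U_e(S)`: the multiset of weights of the players using resource `e` in profile `S`. -/
noncomputable def load (G : WCGame N E d W A) (S : Profile N E) (e : Fin E) : Multiset ℝ :=
  (Finset.univ.filter (fun u => e ∈ S u)).val.map G.w

/-- The cost `c_u(S) = w_u · ∑_{e ∈ s_u} ∑_{k=0}^d a_{e,k} · L(U_e(S))^k` of player `u`
in the original game `Γ`. -/
noncomputable def cost (G : WCGame N E d W A) (S : Profile N E) (u : Fin N) : ℝ :=
  G.w u * ∑ e ∈ S u, ∑ k ∈ Finset.range (d + 1), G.a e k * (G.load S e).sum ^ k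

/-- The cost `ĉ_u(S) = w_u · ∑_{e ∈ s_u} ∑_{k=0}^d a_{e,k} · Ψ̂_k(U_e(S))` of player `u`
in the `Ψ̂`-game `Γ̂`. -/
noncomputable def hcost (G : WCGame N E d W A) (S : Profile N E) (u : Fin N) : ℝ :=
  G.w u * ∑ e ∈ S u, ∑ k ∈ Finset.range (d + 1), G.a e k * psiHat k (G.load S e)

/-- The potential function `Φ̂(S) = ∑_e ∑_{k=0}^d (a_{e,k}/(k+1)) · Ψ̂_{k+1}(U_e(S))`
of the `Ψ̂`-game. -/
noncomputable def potHat (G : WCGame N E d W A) (S : Profile N E) : ℝ :=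
  ∑ e : Fin E, ∑ k ∈ Finset.range (d + 1),
    G.a e k / ((k : ℝ) + 1) * psiHat (k + 1) (G.load S e)

/-- The approximate potential function `Φ(S) = ∑_e Ψ_e(L(U_e(S)))` with
`Ψ_e(x) = a_{e,0}·x + ∑_{k=1}^d a_{e,k}·(x^{k+1}/(k+1) + x^k/2)`. -/
noncomputable def pot (G : WCGame N E d W A) (S : Profile N E) : ℝ :=
  ∑ e : Fin E,
    (G.a e 0 * (G.load S e).sum +
      ∑ k ∈ Finset.Icc 1 d,
        G.a e k * ((G.load S e).sum ^ (k + 1) / ((k : ℝ) + 1) + (G.load S e).sum ^ k / 2))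

/-- `S` is a `ρ`-approximate pure Nash equilibrium w.r.t. the player costs `costFn`:
no player can decrease her cost by more than a factor `ρ` by a unilateral deviation. -/
def IsApproxPNE (G : WCGame N E d W A) (costFn : Profile N E → Fin N → ℝ) (ρ : ℝ)
    (S : Profile N E) : Prop :=
  ∀ u, ∀ s' ∈ G.strat u, costFn S u ≤ ρ * costFn (Function.update S u s') u

/-- `sstar u` is a best response of player `u` to `S₋ᵤ` w.r.t. the costs `costFn`. -/
def IsBestResponses (G : WCGame N E d W A) (costFn : Profile N E → Fin N → ℝ)
    (S : Profile N E) (sstar : Fin N → Finset (Fin E)) : Prop :=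
  ∀ u, sstar u ∈ G.strat u ∧
    ∀ s ∈ G.strat u, costFn (Function.update S u (sstar u)) u ≤ costFn (Function.update S u s) u

/-- One step of Algorithm 1 (the `1/(1-ε)` best response dynamic on the `Ψ̂`-game),
moving from profile `S` to profile `S'` by letting the chosen player `ut` (a player with a
`1/(1-ε)`-move of maximum cost reduction) switch to her best response `sstar ut`. -/
def AlgOneStep (G : WCGame N E d W A) (ε : ℝ) (S S' : Profile N E) (ut : Fin N)
    (sstar : Fin N → Finset (Fin E)) : Prop :=
  G.IsBestResponses G.hcost S sstar ∧
  G.hcost S ut > (1 / (1 - ε)) * G.hcost (Function.update S ut (sstar ut)) ut ∧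
  (∀ u, G.hcost S u > (1 / (1 - ε)) * G.hcost (Function.update S u (sstar u)) u →
    G.hcost S ut - G.hcost (Function.update S ut (sstar ut)) ut ≥
      G.hcost S u - G.hcost (Function.update S u (sstar u)) u) ∧
  S' = Function.update S ut (sstar ut)

/-- One step of Algorithm 2 (the refined `ρ/(1-ε)` best response dynamic on `Γ`),
moving from profile `S` to profile `S'` by letting the chosen player `ut` (a player
maximizing `c_u(S) - ρ·c_u(s_u^*, S₋ᵤ)` among players with `ρ/(1-ε)`-moves) switch to
her best response `sstar ut`. -/
def AlgTwoStep (G : WCGame N E d W A) (ρ ε : ℝ) (S S' : Profile N E) (ut : Fin N)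
    (sstar : Fin N → Finset (Fin E)) : Prop :=
  G.IsBestResponses G.cost S sstar ∧
  G.cost S ut > (ρ / (1 - ε)) * G.cost (Function.update S ut (sstar ut)) ut ∧
  (∀ u, G.cost S u > (ρ / (1 - ε)) * G.cost (Function.update S u (sstar u)) u →
    G.cost S ut - ρ * G.cost (Function.update S ut (sstar ut)) ut ≥
      G.cost S u - ρ * G.cost (Function.update S u (sstar u)) u) ∧
  S' = Function.update S ut (sstar ut)

/-- `c_max`: the maximum cost of a player over all (feasible) profiles in `Γ`. -/
noncomputable def cMax (G : WCGame N E d W A) : ℝ :=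
  sSup {x | ∃ S u, G.IsProfile S ∧ x = G.cost S u}

/-- `ĉ_max`: the maximum cost of a player over all (feasible) profiles in `Γ̂`. -/
noncomputable def hcMax (G : WCGame N E d W A) : ℝ :=
  sSup {x | ∃ S u, G.IsProfile S ∧ x = G.hcost S u}

/-- `Φ̂_min`: the minimum of the potential `Φ̂` over all (feasible) profiles. -/
noncomputable def potHatMin (G : WCGame N E d W A) : ℝ :=
  sInf {x | ∃ S, G.IsProfile S ∧ x = G.potHat S}

/-- `a_min⁺`: the minimum positive coefficient of the latency functions. -/
noncomputable def aMinPos (G : WCGame N E d W A) : ℝ :=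
  sInf {x | 0 < x ∧ ∃ e k, k ≤ d ∧ x = G.a e k}

end WCGame

/-!
Every monomial of degree `k + 1` in the weights is a weight times a monomial of degree `k`, so
`Ψ̂_{k+1}(M) ≤ (k+1)·L(M)·Ψ̂_k(M)` with `L(M)` the total weight. Hence
`Φ̂(S) ≤ ∑_e L(U_e(S))·ĉ_e(S)`, and the right-hand side equals `∑_u ĉ_u(S)` by double counting
the pairs (player, resource used). For the second inequality, `Ψ̂_k(M) ≤ k!·L(M)^k` and
`L(U_e(S)) ≤ N·W`.
-/

theorem hpoly_succ_cons (k : ℕ) (a : ℝ) (l : List ℝ) :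
    hpoly (k + 1) (a :: l) = a * hpoly k (a :: l) + hpoly (k + 1) l := by
  rw [hpoly]

theorem hpoly_nonneg {l : List ℝ} (hl : ∀ x ∈ l, 0 ≤ x) (k : ℕ) : 0 ≤ hpoly k l := by
  induction k, l using hpoly.induct with
  | case1 => simp [hpoly]
  | case2 => simp [hpoly]
  | case3 k a l ih_cons ih_tail =>
    have ha := hl a List.mem_cons_self
    have := ih_cons hl
    have := ih_tail fun x hx => hl x (List.mem_cons_of_mem a hx)
    rw [hpoly_succ_cons]
    positivity

theorem hpoly_le_hpoly_cons {a : ℝ} {l : List ℝ} (ha : 0 ≤ a) (hl : ∀ x ∈ l, 0 ≤ x) (k : ℕ) :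
    hpoly k l ≤ hpoly k (a :: l) := by
  cases k with
  | zero => simp [hpoly]
  | succ k =>
    have hal : ∀ x ∈ a :: l, 0 ≤ x := by simpa using ⟨ha, hl⟩
    rw [hpoly_succ_cons]
    exact le_add_of_nonneg_left (mul_nonneg ha (hpoly_nonneg hal k))

theorem hpoly_succ_le_sum_mul {l : List ℝ} (hl : ∀ x ∈ l, 0 ≤ x) (k : ℕ) :
    hpoly (k + 1) l ≤ l.sum * hpoly k l := by
  induction l with
  | nil => simp [hpoly]
  | cons a l ih =>
    have ha : 0 ≤ a := hl a List.mem_cons_self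
    have hl' : ∀ x ∈ l, 0 ≤ x := fun x hx => hl x (List.mem_cons_of_mem a hx)
    have := List.sum_nonneg hl'
    calc hpoly (k + 1) (a :: l) = a * hpoly k (a :: l) + hpoly (k + 1) l := hpoly_succ_cons k a l
      _ ≤ a * hpoly k (a :: l) + l.sum * hpoly k (a :: l) := by
        gcongr
        exact (ih hl').trans (by gcongr; exact hpoly_le_hpoly_cons ha hl' k)
      _ = (a :: l).sum * hpoly k (a :: l) := by rw [List.sum_cons]; ring

theorem hpoly_le_sum_pow {l : List ℝ} (hl : ∀ x ∈ l, 0 ≤ x) (k : ℕ) :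
    hpoly k l ≤ l.sum ^ k := by
  induction k with
  | zero => simp [hpoly]
  | succ k ih =>
    have := List.sum_nonneg hl
    calc hpoly (k + 1) l ≤ l.sum * hpoly k l := hpoly_succ_le_sum_mul hl k
      _ ≤ l.sum * l.sum ^ k := by gcongr
      _ = l.sum ^ (k + 1) := by ring

section psiHat

variable {M : Multiset ℝ}

theorem psiHat_nonneg (hM : ∀ x ∈ M, 0 ≤ x) (k : ℕ) : 0 ≤ psiHat k M := by
  have := hpoly_nonneg (fun x hx => hM x (Multiset.mem_toList.1 hx)) k
  unfold psiHat
  positivity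

theorem psiHat_succ_le (hM : ∀ x ∈ M, 0 ≤ x) (k : ℕ) :
    psiHat (k + 1) M ≤ ((k : ℝ) + 1) * M.sum * psiHat k M := by
  have := hpoly_succ_le_sum_mul (fun x hx => hM x (Multiset.mem_toList.1 hx)) k
  unfold psiHat
  rw [Nat.factorial_succ, ← Multiset.sum_toList]
  push_cast
  calc ((k : ℝ) + 1) * (k.factorial : ℝ) * hpoly (k + 1) M.toList
      ≤ ((k : ℝ) + 1) * (k.factorial : ℝ) * (M.toList.sum * hpoly k M.toList) := by gcongr
    _ = ((k : ℝ) + 1) * M.toList.sum * ((k.factorial : ℝ) * hpoly k M.toList) := by ring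

theorem psiHat_le_factorial_mul_sum_pow (hM : ∀ x ∈ M, 0 ≤ x) (k : ℕ) :
    psiHat k M ≤ k.factorial * M.sum ^ k := by
  have := hpoly_le_sum_pow (fun x hx => hM x (Multiset.mem_toList.1 hx)) k
  unfold psiHat
  rw [← Multiset.sum_toList]
  gcongr

end psiHat

theorem sum_le_card_mul_iSup {ι : Type*} [Fintype ι] (f : ι → ℝ) :
    ∑ i, f i ≤ Fintype.card ι * ⨆ i, f i := by
  simpa using Finset.sum_le_card_nsmul Finset.univ f _
    fun i _ => le_ciSup (Set.finite_range f).bddAbove i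

theorem card_mul_iSup_le {ι : Type*} [Fintype ι] {f : ι → ℝ} {B : ℝ} (h : ∀ i, f i ≤ B) :
    Fintype.card ι * ⨆ i, f i ≤ Fintype.card ι * B := by
  cases isEmpty_or_nonempty ι
  · simp
  · gcongr
    exact ciSup_le h

namespace WCGame

variable {N E d : ℕ} {W A : ℝ}

theorem W_nonneg (G : WCGame N E d W A) : 0 ≤ W := zero_le_one.trans G.hW

variable (G : WCGame N E d W A) (S : Profile N E)

/-- The latency `ĉ_e(S)` of resource `e` in the `Ψ̂`-game. -/
noncomputable def hlatency (e : Fin E) : ℝ :=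
  ∑ k ∈ Finset.range (d + 1), G.a e k * psiHat k (G.load S e)

theorem hcost_eq_mul_sum_hlatency (u : Fin N) :
    G.hcost S u = G.w u * ∑ e ∈ S u, G.hlatency S e := rfl

theorem load_sum_eq (e : Fin E) :
    (G.load S e).sum = ∑ u ∈ Finset.univ.filter (fun u => e ∈ S u), G.w u := rfl

theorem load_nonneg (e : Fin E) : ∀ x ∈ G.load S e, 0 ≤ x := by
  intro x hx
  obtain ⟨u, -, rfl⟩ := Multiset.mem_map.1 hx
  linarith [G.hw_lower u]

theorem load_sum_le (e : Fin E) : (G.load S e).sum ≤ N * W := by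
  have := G.W_nonneg
  have hcard : (G.load S e).card ≤ N :=
    (Multiset.card_map _ _).trans_le ((Finset.card_le_univ _).trans_eq (Fintype.card_fin N))
  calc (G.load S e).sum ≤ (G.load S e).card • W :=
        Multiset.sum_le_card_nsmul _ _ fun x hx => by
          obtain ⟨u, -, rfl⟩ := Multiset.mem_map.1 hx
          exact G.hw_upper u
    _ ≤ N * W := by
        rw [nsmul_eq_mul]
        gcongr

theorem hlatency_nonneg (e : Fin E) : 0 ≤ G.hlatency S e :=
  Finset.sum_nonneg fun k _ => mul_nonneg (G.ha_nonneg e k) (psiHat_nonneg (G.load_nonneg S e) k)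

theorem sum_hcost_eq_sum_load_mul_hlatency :
    ∑ u, G.hcost S u = ∑ e, (G.load S e).sum * G.hlatency S e := by
  simp_rw [hcost_eq_mul_sum_hlatency, Finset.mul_sum, load_sum_eq, Finset.sum_mul]
  exact Finset.sum_comm' fun u e => by simp

theorem potHat_le_sum_hcost : G.potHat S ≤ ∑ u, G.hcost S u := by
  rw [sum_hcost_eq_sum_load_mul_hlatency, potHat]
  gcongr with e
  rw [hlatency, Finset.mul_sum]
  refine Finset.sum_le_sum fun k _ => ?_
  have := G.ha_nonneg e k
  calc G.a e k / ((k : ℝ) + 1) * psiHat (k + 1) (G.load S e)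
      ≤ G.a e k / ((k : ℝ) + 1) * (((k : ℝ) + 1) * (G.load S e).sum * psiHat k (G.load S e)) := by
        gcongr
        exact psiHat_succ_le (G.load_nonneg S e) k
    _ = (G.load S e).sum * (G.a e k * psiHat k (G.load S e)) := by
        field_simp

theorem psiHat_load_le (hN : 0 < N) (e : Fin E) {k : ℕ} (hk : k ≤ d) :
    psiHat k (G.load S e) ≤ d.factorial * (N * W) ^ d := by
  have hNW : 1 ≤ (N : ℝ) * W := one_le_mul_of_one_le_of_one_le (by exact_mod_cast hN) G.hW
  calc psiHat k (G.load S e) ≤ k.factorial * (G.load S e).sum ^ k :=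
        psiHat_le_factorial_mul_sum_pow (G.load_nonneg S e) k
    _ ≤ d.factorial * (N * W) ^ k := by
        have := Multiset.sum_nonneg (G.load_nonneg S e)
        have := G.load_sum_le S e
        have : (k.factorial : ℝ) ≤ d.factorial := by exact_mod_cast Nat.factorial_le hk
        gcongr
    _ ≤ d.factorial * (N * W) ^ d := by gcongr

theorem hlatency_le (hN : 0 < N) {a : ℝ} (ha : ∀ e k, k ≤ d → G.a e k ≤ a) (e : Fin E) :
    G.hlatency S e ≤ (d + 1).factorial * a * (N * W) ^ d := by
  have := G.W_nonneg
  calc G.hlatency S e ≤ ∑ _k ∈ Finset.range (d + 1), a * (d.factorial * (N * W) ^ d) := by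
        refine Finset.sum_le_sum fun k hk => ?_
        have hkd : k ≤ d := Nat.lt_succ_iff.1 (Finset.mem_range.1 hk)
        calc G.a e k * psiHat k (G.load S e) ≤ G.a e k * (d.factorial * (N * W) ^ d) := by
              gcongr
              exacts [G.ha_nonneg e k, G.psiHat_load_le S hN e hkd]
          _ ≤ a * (d.factorial * (N * W) ^ d) := by gcongr; exact ha e k hkd
    _ = (d + 1).factorial * a * (N * W) ^ d := by
        rw [Finset.sum_const, Finset.card_range, nsmul_eq_mul, Nat.factorial_succ]
        push_cast
        ring

theorem hcost_le {a : ℝ} (ha : ∀ e k, k ≤ d → G.a e k ≤ a) (u : Fin N) :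
    G.hcost S u ≤ N ^ d * W ^ (d + 1) * E * (d + 1).factorial * a := by
  calc G.hcost S u ≤ W * ∑ e, G.hlatency S e := by
        rw [hcost_eq_mul_sum_hlatency]
        exact mul_le_mul (G.hw_upper u)
          (Finset.sum_le_sum_of_subset_of_nonneg (Finset.subset_univ _)
            fun e _ _ => G.hlatency_nonneg S e)
          (Finset.sum_nonneg fun e _ => G.hlatency_nonneg S e) G.W_nonneg
    _ ≤ W * ∑ _e : Fin E, (d + 1).factorial * a * (N * W) ^ d := by
        have := G.W_nonneg
        gcongr with e
        exact G.hlatency_le S u.pos ha e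
    _ = N ^ d * W ^ (d + 1) * E * (d + 1).factorial * a := by
        rw [Finset.sum_const, Finset.card_univ, Fintype.card_fin, nsmul_eq_mul]
        ring

theorem coeff_le_sSup {e : Fin E} {k : ℕ} (hk : k ≤ d) :
    G.a e k ≤ sSup {x | ∃ e : Fin E, ∃ k : ℕ, k ≤ d ∧ x = G.a e k} := by
  refine le_csSup (Set.Finite.bddAbove ?_) ⟨e, k, hk, rfl⟩
  refine (Set.finite_range fun p : Fin E × Fin (d + 1) => G.a p.1 p.2).subset ?_
  rintro x ⟨e, k, hk, rfl⟩
  exact ⟨(e, ⟨k, Nat.lt_succ_of_le hk⟩), rfl⟩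

end WCGame

open WCGame in
theorem potHat_le_N_mul_max_hcost_general {N E d : ℕ} {W A : ℝ}
    (G : WCGame N E d W A)
    (S : Profile N E) :
    G.potHat S ≤ (N : ℝ) * sSup {x | ∃ u : Fin N, x = G.hcost S u} ∧
      (N : ℝ) * sSup {x | ∃ u : Fin N, x = G.hcost S u} ≤
        (N : ℝ) ^ (d + 1) * W ^ (d + 1) * (E : ℝ) * (Nat.factorial (d + 1) : ℝ) *
          sSup {x | ∃ e : Fin E, ∃ k : ℕ, k ≤ d ∧ x = G.a e k} := by
  have hrange : {x | ∃ u : Fin N, x = G.hcost S u} = Set.range (G.hcost S) := by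
    ext
    simp [eq_comm]
  rw [hrange]
  constructor
  · calc G.potHat S ≤ ∑ u, G.hcost S u := G.potHat_le_sum_hcost S
      _ ≤ N * ⨆ u, G.hcost S u := by simpa using sum_le_card_mul_iSup (G.hcost S)
  · calc (N : ℝ) * ⨆ u, G.hcost S u
        ≤ N * (N ^ d * W ^ (d + 1) * E * (d + 1).factorial *
          sSup {x | ∃ e : Fin E, ∃ k : ℕ, k ≤ d ∧ x = G.a e k}) := by
          simpa using card_mul_iSup_le (G.hcost_le S fun e k hk => G.coeff_le_sSup hk)
      _ = _ := by ring

open WCGame in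
/-- Inequality (6): for every profile `S`,
`Φ̂(S) ≤ N·max_u ĉ_u(S) ≤ N^{d+1}·W^{d+1}·E·(d+1)!·max_{e,k} a_{e,k}`. -/
theorem potHat_le_N_mul_max_hcost {N E d : ℕ} {W A : ℝ}
    (G : WCGame N E d W A) (hN : 0 < N) (hE : 0 < E)
    (S : Profile N E) (hS : G.IsProfile S) :
    G.potHat S ≤ (N : ℝ) * sSup {x | ∃ u : Fin N, x = G.hcost S u} ∧
      (N : ℝ) * sSup {x | ∃ u : Fin N, x = G.hcost S u} ≤
        (N : ℝ) ^ (d + 1) * W ^ (d + 1) * (E : ℝ) * (Nat.factorial (d + 1) : ℝ) *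
          sSup {x | ∃ e : Fin E, ∃ k : ℕ, k ≤ d ∧ x = G.a e k} :=
  potHat_le_N_mul_max_hcost_general G S
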